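/- The type interpretation is monotone with respect to the subtyping preorder: for all types σ, τ, if σ ≤ τ then ⟦σ⟧ ⊆ ⟦τ⟧. -/
import Mathlib


/-- λμ-terms: variables, abstraction, application, and μ-abstraction
    `mu a b M` represents μα.[β]M (a = α, b = β). -/
inductive Trm : Type
  | var : ℕ → Trm
  | lam : ℕ → Trm → Trm
  | app : Trm → Trm → Trm
  | mu  : ℕ → ℕ → Trm → Trm
deriving DecidableEq

/-- Term substitution M[N/x] (Barendregt convention: no capture). -/
def subst : Trm → ℕ → Trm → Trm
  | .var y, x, N => if y = x then N else .var y
  | .lam y M, x, N => .lam y (subst M x N)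
  | .app M P, x, N => .app (subst M x N) (subst P x N)
  | .mu a b M, x, N => .mu a b (subst M x N)

/-- Structural substitution M{α ⇐ N}: every named subterm [α]P becomes [α]PN. -/
def ssub : Trm → ℕ → Trm → Trm
  | .var y, _, _ => .var y
  | .lam y M, a, N => .lam y (ssub M a N)
  | .app M P, a, N => .app (ssub M a N) (ssub P a N)
  | .mu b c M, a, N =>
      .mu b c (if c = a then .app (ssub M a N) N else ssub M a N)

/-- Iterated structural substitution M{α ⇐ N₁}…{α ⇐ Nₘ}. -/
def ssubs (a : ℕ) (M : Trm) (Ns : List Trm) : Trm :=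
  Ns.foldl (fun T N => ssub T a N) M

/-- Application of a term to a stack of terms: M L₁ … Lₖ. -/
def appList (M : Trm) (L : List Trm) : Trm := L.foldl .app M

/-- One-step reduction: logical (β) and structural (μ) rules, compatible closure. -/
inductive Red : Trm → Trm → Prop
  | beta (x : ℕ) (M N : Trm) : Red (.app (.lam x M) N) (subst M x N)
  | mu (a b : ℕ) (M N : Trm) : Red (.app (.mu a b M) N) (ssub (.mu a b M) a N)
  | appL {M M' : Trm} (N : Trm) : Red M M' → Red (.app M N) (.app M' N)
  | appR (M : Trm) {N N' : Trm} : Red N N' → Red (.app M N) (.app M N')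
  | lam (x : ℕ) {M M' : Trm} : Red M M' → Red (.lam x M) (.lam x M')
  | muC (a b : ℕ) {M M' : Trm} : Red M M' → Red (.mu a b M) (.mu a b M')

/-- Strong normalisation: no infinite reduction sequence from M. -/
def SN (M : Trm) : Prop := Acc (fun p q => Red q p) M

/-- Stacks of strongly normalising terms. -/
def SNs (L : List Trm) : Prop := ∀ P ∈ L, SN P

mutual
/-- Term types δ ::= ν | ω→ν | κ→ν | δ∧δ. -/
inductive TyD : Type
  | nu : TyD
  | arrOmega : TyD
  | arr : TyC → TyD
  | inter : TyD → TyD → TyD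
/-- Continuation-stack types κ ::= δ×ω | δ×κ | κ∧κ. -/
inductive TyC : Type
  | prodOmega : TyD → TyC
  | prod : TyD → TyC → TyC
  | inter : TyC → TyC → TyC
end

mutual
/-- The subtyping preorder on term types. -/
inductive LeD : TyD → TyD → Prop
  | refl (d) : LeD d d
  | trans {d1 d2 d3} : LeD d1 d2 → LeD d2 d3 → LeD d1 d3
  | interL (d1 d2) : LeD (.inter d1 d2) d1
  | interR (d1 d2) : LeD (.inter d1 d2) d2
  | glb {d d1 d2} : LeD d d1 → LeD d d2 → LeD d (.inter d1 d2)
  | nuOmega : LeD .nu .arrOmega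
  | omegaNu : LeD .arrOmega .nu
  | arr {k1 k2} : LeC k2 k1 → LeD (.arr k1) (.arr k2)
/-- The subtyping preorder on continuation-stack types. -/
inductive LeC : TyC → TyC → Prop
  | refl (k) : LeC k k
  | trans {k1 k2 k3} : LeC k1 k2 → LeC k2 k3 → LeC k1 k3
  | interL (k1 k2) : LeC (.inter k1 k2) k1
  | interR (k1 k2) : LeC (.inter k1 k2) k2
  | glb {k k1 k2} : LeC k k1 → LeC k k2 → LeC k (.inter k1 k2)
  | drop (d1 d2) : LeC (.prod d1 (.prodOmega d2)) (.prodOmega d1)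
  | distOmega (d1 d2 k) :
      LeC (.inter (.prodOmega d1) (.prod d2 k)) (.prod (.inter d1 d2) k)
  | dist (d1 d2 k1 k2) :
      LeC (.inter (.prod d1 k1) (.prod d2 k2))
          (.prod (.inter d1 d2) (.inter k1 k2))
  | monoOmega {d1 d2} : LeD d1 d2 → LeC (.prodOmega d1) (.prodOmega d2)
  | mono {d1 d2 k1 k2} : LeD d1 d2 → LeC k1 k2 → LeC (.prod d1 k1) (.prod d2 k2)
end

mutual
/-- Interpretation of term types as sets of terms. -/
def semD : TyD → Set Trm
  | .nu => {M | SN M}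
  | .arrOmega => {M | SN M}
  | .arr k => {M | ∀ L ∈ semC k, SN (appList M L)}
  | .inter d1 d2 => semD d1 ∩ semD d2
/-- Interpretation of continuation-stack types as sets of stacks. -/
def semC : TyC → Set (List Trm)
  | .prodOmega d => {l | ∃ N L, l = N :: L ∧ N ∈ semD d ∧ SNs L}
  | .prod d k => {l | ∃ N L, l = N :: L ∧ N ∈ semD d ∧ L ∈ semC k}
  | .inter k1 k2 => semC k1 ∩ semC k2
end

/-- Minimal length ‖κ‖ of stacks in ⟦κ⟧. -/
def lenC : TyC → ℕ
  | .prodOmega _ => 1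
  | .prod _ k => 1 + lenC k
  | .inter k1 k2 => max (lenC k1) (lenC k2)

abbrev Ctx := ℕ → Option TyD
abbrev NCtx := ℕ → Option TyC

/-- The intersection type assignment system for λμ.
    In the (abs)/(app) rules κ may be a continuation type or ω, hence two forms. -/
inductive Typ : Ctx → Trm → TyD → NCtx → Prop
  | ax {Γ : Ctx} {x δ} (Δ : NCtx) : Γ x = some δ → Typ Γ (.var x) δ Δ
  | abs {Γ x δ κ M Δ} : Typ (Function.update Γ x (some δ)) M (.arr κ) Δ →
      Typ Γ (.lam x M) (.arr (.prod δ κ)) Δ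
  | absOmega {Γ x δ M Δ} : Typ (Function.update Γ x (some δ)) M .arrOmega Δ →
      Typ Γ (.lam x M) (.arr (.prodOmega δ)) Δ
  | app {Γ M N δ κ Δ} : Typ Γ M (.arr (.prod δ κ)) Δ → Typ Γ N δ Δ →
      Typ Γ (.app M N) (.arr κ) Δ
  | appOmega {Γ M N δ Δ} : Typ Γ M (.arr (.prodOmega δ)) Δ → Typ Γ N δ Δ →
      Typ Γ (.app M N) .arrOmega Δ
  | muNe {Γ M a b κ κ' Δ} : a ≠ b →
      Typ Γ M (.arr κ') (Function.update (Function.update Δ b (some κ')) a (some κ)) →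
      Typ Γ (.mu a b M) (.arr κ) (Function.update Δ b (some κ'))
  | muEq {Γ M a κ Δ} : Typ Γ M (.arr κ) (Function.update Δ a (some κ)) →
      Typ Γ (.mu a a M) (.arr κ) Δ
  | sub {Γ M δ δ' Δ} : Typ Γ M δ Δ → LeD δ δ' → Typ Γ M δ' Δ
  | inter {Γ M δ1 δ2 Δ} : Typ Γ M δ1 Δ → Typ Γ M δ2 Δ → Typ Γ M (.inter δ1 δ2) Δ

/-- Free variables. -/
def fv : Trm → Set ℕ
  | .var x => {x}
  | .lam x M => fv M \ {x}
  | .app M N => fv M ∪ fv N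
  | .mu _ _ M => fv M

/-- Free names. -/
def fn : Trm → Set ℕ
  | .var _ => ∅
  | .lam _ M => fn M
  | .app M N => fn M ∪ fn N
  | .mu a b M => (fn M ∪ {b}) \ {a}

/-- Bound variables. -/
def bv : Trm → Set ℕ
  | .var _ => ∅
  | .lam x M => {x} ∪ bv M
  | .app M N => bv M ∪ bv N
  | .mu _ _ M => bv M

/-- Bound names. -/
def bn : Trm → Set ℕ
  | .var _ => ∅
  | .lam _ M => bn M
  | .app M N => bn M ∪ bn N
  | .mu a _ M => {a} ∪ bn M

/-- Γ' ≤ Γ on variable contexts. -/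
def CtxLe (Γ' Γ : Ctx) : Prop :=
  ∀ x δ, Γ x = some δ → ∃ δ', Γ' x = some δ' ∧ LeD δ' δ

/-- Δ' ≤ Δ on name contexts. -/
def NCtxLe (Δ' Δ : NCtx) : Prop :=
  ∀ a κ, Δ a = some κ → ∃ κ', Δ' a = some κ' ∧ LeC κ' κ

/-- Application of a parallel substitution (ξv on variables, ξn on names;
    default ξv x = var x / ξn a = [] encodes "not in the domain"). -/
def psub (ξv : ℕ → Trm) (ξn : ℕ → List Trm) : Trm → Trm
  | .var x => ξv x
  | .lam x M => .lam x (psub ξv ξn M)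
  | .app M N => .app (psub ξv ξn M) (psub ξv ξn N)
  | .mu a b M => .mu a b (appList (psub ξv ξn M) (ξn b))

/-- Normal forms: N ::= x N₁…Nₖ | λx.N | μα.[β]N. -/
inductive Nf : Trm → Prop
  | varApp (x : ℕ) (Ns : List Trm) : (∀ N ∈ Ns, Nf N) → Nf (appList (.var x) Ns)
  | lam (x : ℕ) {M} : Nf M → Nf (.lam x M)
  | mu (a b : ℕ) {M} : Nf M → Nf (.mu a b M)

/-- Simple types (logical formulas) A ::= φ | A → B. -/
inductive SType : Type
  | base : ℕ → SType
  | arrow : SType → SType → SType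

abbrev SCtx := ℕ → Option SType

/-- Parigot's simply-typed λμ-calculus (propositional fragment). -/
inductive STyp : SCtx → Trm → SType → SCtx → Prop
  | ax {Γ : SCtx} {x A} (Δ : SCtx) : Γ x = some A → STyp Γ (.var x) A Δ
  | arrI {Γ x A B M Δ} : STyp (Function.update Γ x (some A)) M B Δ →
      STyp Γ (.lam x M) (.arrow A B) Δ
  | arrE {Γ M N A B Δ} : STyp Γ M (.arrow A B) Δ → STyp Γ N A Δ →
      STyp Γ (.app M N) B Δ
  | mu1 {Γ M a A Δ} : STyp Γ M A (Function.update Δ a (some A)) →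
      STyp Γ (.mu a a M) A Δ
  | mu2 {Γ M a b A B Δ} : a ≠ b →
      STyp Γ M B (Function.update (Function.update Δ b (some B)) a (some A)) →
      STyp Γ (.mu a b M) A (Function.update Δ b (some B))

/-- Translation of formulas to continuation-stack types. -/
def transC : SType → TyC
  | .base _ => .prodOmega .nu
  | .arrow A B => .prod (.arr (transC A)) (transC B)

/-- Translation of formulas to term types. -/
def transD (A : SType) : TyD := .arr (transC A)

-- ==================== auxiliary lemmas for sem_mono ====================

lemma SN_var (x : ℕ) : SN (.var x) := by
  constructor; intro y h; cases h

/-- one-step reduction of a stack at a single position -/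
inductive StepL : List Trm → List Trm → Prop
  | head {N N' : Trm} (Ns : List Trm) : Red N N' → StepL (N' :: Ns) (N :: Ns)
  | tail (N : Trm) {Ns Ns' : List Trm} : StepL Ns' Ns → StepL (N :: Ns') (N :: Ns)

lemma StepL.append_right {Ns Ns' : List Trm} (h : StepL Ns' Ns) (L : List Trm) :
    StepL (Ns' ++ L) (Ns ++ L) := by
  induction h with
  | head Ns r => exact .head _ r
  | tail N _ ih => exact .tail _ ih

lemma StepL.append_left (Ns : List Trm) {N N' : Trm} (r : Red N N') :
    StepL (Ns ++ [N']) (Ns ++ [N]) := by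
  induction Ns with
  | nil => exact .head _ r
  | cons M Ns ih => exact .tail _ ih

lemma accCons : ∀ (N : Trm), SN N → ∀ (Ns : List Trm),
    Acc (fun p q => StepL p q) Ns → Acc (fun p q => StepL p q) (N :: Ns) := by
  intro N hN
  induction hN with
  | intro N _ ihN =>
  intro Ns hNs
  induction hNs with
  | intro Ns hNs ihNs =>
  constructor
  intro y hy
  cases hy with
  | head _ r => exact ihN _ r _ (Acc.intro _ hNs)
  | tail _ s => exact ihNs _ s

lemma accList : ∀ (Ns : List Trm), SNs Ns → Acc (fun p q => StepL p q) Ns := by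
  intro Ns h
  induction Ns with
  | nil => constructor; intro y hy; cases hy
  | cons N Ns ih =>
      exact accCons N (h N (by simp)) Ns (ih fun P hP => h P (by simp [hP]))

lemma appList_append (M : Trm) (L1 L2 : List Trm) :
    appList M (L1 ++ L2) = appList (appList M L1) L2 := by
  simp [appList, List.foldl_append]

lemma appList_not_lam_mu : ∀ (Ns : List Trm) (M : Trm),
    (∀ x N, M ≠ .lam x N) ∧ (∀ a b N, M ≠ .mu a b N) →
    (∀ x N, appList M Ns ≠ .lam x N) ∧ (∀ a b N, appList M Ns ≠ .mu a b N) := by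
  intro Ns
  induction Ns with
  | nil => intro M h; exact h
  | cons P Ns ih =>
      intro M _
      exact ih (.app M P) (by constructor <;> intros <;> simp [appList])

lemma red_var_appList : ∀ (Ns : List Trm) (x : ℕ) (P : Trm),
    Red (appList (.var x) Ns) P → ∃ Ns', P = appList (.var x) Ns' ∧ StepL Ns' Ns := by
  intro Ns
  induction Ns using List.reverseRecOn with
  | nil => intro x P h; cases h
  | append_singleton Ns N ih =>
      intro x P h
      rw [appList_append] at h
      have hform := appList_not_lam_mu Ns (.var x) (by constructor <;> intros <;> simp)
      have hA : appList (Trm.var x) Ns = appList (Trm.var x) Ns := rfl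
      revert h
      generalize hAe : appList (Trm.var x) Ns = A at hform
      intro h
      have happ : appList A [N] = Trm.app A N := rfl
      rw [show appList A [N] = Trm.app A N from rfl] at h
      cases h with
      | beta y M N => exact absurd rfl (hform.1 y M)
      | mu a b M N => exact absurd rfl (hform.2 a b M)
      | appL _ r =>
          subst hAe
          obtain ⟨Ns', rfl, s⟩ := ih x _ r
          exact ⟨Ns' ++ [N], by simp [appList_append, appList], s.append_right _⟩
      | appR _ r =>
          subst hAe
          exact ⟨Ns ++ [_], by simp [appList_append, appList], StepL.append_left Ns r⟩

lemma SN_appList_var (x : ℕ) (Ns : List Trm) (h : SNs Ns) : SN (appList (.var x) Ns) := by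
  have hacc := accList Ns h
  clear h
  induction hacc with
  | intro Ns _ ih =>
  constructor
  intro P hP
  obtain ⟨Ns', rfl, s⟩ := red_var_appList Ns x P hP
  exact ih Ns' s

lemma red_appList {M M' : Trm} (L : List Trm) (h : Red M M') :
    Red (appList M L) (appList M' L) := by
  induction L generalizing M M' with
  | nil => exact h
  | cons N L ih => exact ih (Red.appL N h)

lemma SN_of_appList {M : Trm} {L : List Trm} (h : SN (appList M L)) : SN M := by
  have key : ∀ T, SN T → ∀ M, appList M L = T → SN M := by
    intro T hT
    induction hT with
    | intro T _ ih =>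
        intro M hM
        subst hM
        constructor
        intro P hP
        exact ih (appList P L) (red_appList L hP) P rfl
  exact key _ h M rfl

mutual
theorem varD : ∀ (d : TyD) (x : ℕ), Trm.var x ∈ semD d
  | .nu, x => SN_var x
  | .arrOmega, x => SN_var x
  | .arr k, x => fun L hL => SN_appList_var x L (snsC k hL)
  | .inter d1 d2, x => ⟨varD d1 x, varD d2 x⟩

theorem snD : ∀ (d : TyD) {M : Trm}, M ∈ semD d → SN M
  | .nu, _, h => h
  | .arrOmega, _, h => h
  | .arr k, M, h =>
      SN_of_appList (h _ (replC k (lenC k) le_rfl))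
  | .inter d1 _, _, h => snD d1 h.1

theorem snsC : ∀ (k : TyC) {L : List Trm}, L ∈ semC k → SNs L
  | .prodOmega d, _, ⟨N, L, rfl, hN, hL⟩ => by
      intro P hP
      rcases List.mem_cons.mp hP with rfl | hP
      · exact snD d hN
      · exact hL P hP
  | .prod d k, _, ⟨N, L, rfl, hN, hL⟩ => by
      intro P hP
      rcases List.mem_cons.mp hP with rfl | hP
      · exact snD d hN
      · exact snsC k hL P hP
  | .inter k1 _, _, h => snsC k1 h.1

theorem replC : ∀ (k : TyC) (n : ℕ), lenC k ≤ n →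
    List.replicate n (Trm.var 0) ∈ semC k
  | .prodOmega d, n, h => by
      obtain ⟨m, rfl⟩ := Nat.exists_eq_add_of_le h
      refine ⟨.var 0, List.replicate m (.var 0), ?_,
        varD d 0, fun P hP => by rw [List.eq_of_mem_replicate hP]; exact SN_var 0⟩
      rw [show lenC (TyC.prodOmega d) + m = m + 1 from by
        show 1 + m = m + 1; omega, List.replicate_succ]
  | .prod d k, n, h => by
      have h1 : 1 + lenC k ≤ n := h
      obtain ⟨m, rfl⟩ := Nat.exists_eq_add_of_le h1
      refine ⟨.var 0, List.replicate (lenC k + m) (.var 0), ?_,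
        varD d 0, replC k (lenC k + m) (Nat.le_add_right _ _)⟩
      rw [show 1 + lenC k + m = (lenC k + m) + 1 from by omega, List.replicate_succ]
  | .inter k1 k2, n, h => by
      have h' : max (lenC k1) (lenC k2) ≤ n := h
      exact ⟨replC k1 n (le_trans (le_max_left _ _) h'),
             replC k2 n (le_trans (le_max_right _ _) h')⟩
end

section MainCases

variable {σ τ : TyD} {κ₁ κ₂ : TyC}

lemma case_drop (d1 d2 : TyD) :
    semC (.prod d1 (.prodOmega d2)) ⊆ semC (.prodOmega d1) := by
  rintro l ⟨N, _, rfl, hN, N', L', rfl, hN', hL'⟩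
  refine ⟨N, N' :: L', rfl, hN, ?_⟩
  intro P hP
  rcases List.mem_cons.mp hP with rfl | hP
  · exact snD d2 hN'
  · exact hL' P hP

lemma case_distOmega (d1 d2 : TyD) (k : TyC) :
    semC (.inter (.prodOmega d1) (.prod d2 k)) ⊆ semC (.prod (.inter d1 d2) k) := by
  rintro l ⟨⟨N, L, rfl, hN1, _⟩, ⟨N', L', he, hN2, hL2⟩⟩
  obtain ⟨rfl, rfl⟩ : N = N' ∧ L = L' := by injection he with h1 h2; exact ⟨h1, h2⟩
  exact ⟨N, L, rfl, ⟨hN1, hN2⟩, hL2⟩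

lemma case_dist (d1 d2 : TyD) (k1 k2 : TyC) :
    semC (.inter (.prod d1 k1) (.prod d2 k2)) ⊆
      semC (.prod (.inter d1 d2) (.inter k1 k2)) := by
  rintro l ⟨⟨N, L, rfl, hN1, hL1⟩, ⟨N', L', he, hN2, hL2⟩⟩
  obtain ⟨rfl, rfl⟩ : N = N' ∧ L = L' := by injection he with h1 h2; exact ⟨h1, h2⟩
  exact ⟨N, L, rfl, ⟨hN1, hN2⟩, hL1, hL2⟩

lemma case_monoOmega {d1 d2 : TyD} (ih : semD d1 ⊆ semD d2) :
    semC (.prodOmega d1) ⊆ semC (.prodOmega d2) := by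
  rintro l ⟨N, L, rfl, hN, hL⟩
  exact ⟨N, L, rfl, ih hN, hL⟩

lemma case_mono {d1 d2 : TyD} {k1 k2 : TyC}
    (ih1 : semD d1 ⊆ semD d2) (ih2 : semC k1 ⊆ semC k2) :
    semC (.prod d1 k1) ⊆ semC (.prod d2 k2) := by
  rintro l ⟨N, L, rfl, hN, hL⟩
  exact ⟨N, L, rfl, ih1 hN, ih2 hL⟩

lemma case_arr {k1 k2 : TyC} (ih : semC k2 ⊆ semC k1) :
    semD (.arr k1) ⊆ semD (.arr k2) :=
  fun _ hM L hL => hM L (ih hL)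

end MainCases

/-- The interpretation is monotone w.r.t. the subtyping preorder. -/
theorem sem_mono :
    (∀ σ τ : TyD, LeD σ τ → semD σ ⊆ semD τ) ∧
    (∀ κ₁ κ₂ : TyC, LeC κ₁ κ₂ → semC κ₁ ⊆ semC κ₂) := by
  constructor
  · intro σ τ h
    refine LeD.rec (motive_1 := fun a b _ => semD a ⊆ semD b)
      (motive_2 := fun a b _ => semC a ⊆ semC b)
      (fun _ => subset_rfl)
      (fun _ _ ih1 ih2 => ih1.trans ih2)
      (fun _ _ => Set.inter_subset_left)
      (fun _ _ => Set.inter_subset_right)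
      (fun _ _ ih1 ih2 => Set.subset_inter ih1 ih2)
      subset_rfl
      subset_rfl
      (fun _ ih => case_arr ih)
      (fun _ => subset_rfl)
      (fun _ _ ih1 ih2 => ih1.trans ih2)
      (fun _ _ => Set.inter_subset_left)
      (fun _ _ => Set.inter_subset_right)
      (fun _ _ ih1 ih2 => Set.subset_inter ih1 ih2)
      (fun d1 d2 => case_drop d1 d2)
      (fun d1 d2 k => case_distOmega d1 d2 k)
      (fun d1 d2 k1 k2 => case_dist d1 d2 k1 k2)
      (fun _ ih => case_monoOmega ih)
      (fun _ _ ih1 ih2 => case_mono ih1 ih2)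
      h
  · intro κ₁ κ₂ h
    refine LeC.rec (motive_1 := fun a b _ => semD a ⊆ semD b)
      (motive_2 := fun a b _ => semC a ⊆ semC b)
      (fun _ => subset_rfl)
      (fun _ _ ih1 ih2 => ih1.trans ih2)
      (fun _ _ => Set.inter_subset_left)
      (fun _ _ => Set.inter_subset_right)
      (fun _ _ ih1 ih2 => Set.subset_inter ih1 ih2)
      subset_rfl
      subset_rfl
      (fun _ ih => case_arr ih)
      (fun _ => subset_rfl)
      (fun _ _ ih1 ih2 => ih1.trans ih2)
      (fun _ _ => Set.inter_subset_left)
      (fun _ _ => Set.inter_subset_right)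
      (fun _ _ ih1 ih2 => Set.subset_inter ih1 ih2)
      (fun d1 d2 => case_drop d1 d2)
      (fun d1 d2 k => case_distOmega d1 d2 k)
      (fun d1 d2 k1 k2 => case_dist d1 d2 k1 k2)
      (fun _ ih => case_monoOmega ih)
      (fun _ _ ih1 ih2 => case_mono ih1 ih2)
      h
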